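/- Let m, m12 be positive integers and n = m·m12; identify Fin n with Fin m × Fin m12. For ζ : Fin m → ℂ let N(ζ) : Fin 2 → Fin n → Fin n → ℂ be the tensor whose slice N(ζ) 0 is the identity matrix and whose slice N(ζ) 1 is the diagonal matrix whose diagonal entry at position (i,p) is ζ i (i.e. the block-diagonal pencil ⊞_{i=1}^m (v0 + ζ_i v1)·Id_{m12}). Then TNS(m,m12,m; 2,n,n) equals the Euclidean closure of the set of tensors T with T a b c = ∑_{b',c'} g1 b b' · g2 c c' · N(ζ) a b' c' for some ζ : Fin m → ℂ and some matrices g1, g2 ∈ Matrix (Fin n) (Fin n) ℂ (equivalently, with g1, g2 ranging only over invertible matrices). -/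

import Mathlib

open scoped BigOperators

noncomputable section

/-- Parametrized triangle tensor network tensors. -/
def tnsSet (m01 m12 m02 n0 n1 n2 : ℕ) :
    Set (Fin n0 → Fin n1 → Fin n2 → ℂ) :=
  {T | ∃ (X0 : Fin n0 → Fin m01 × Fin m02 → ℂ)
        (X1 : Fin n1 → Fin m01 × Fin m12 → ℂ)
        (X2 : Fin n2 → Fin m12 × Fin m02 → ℂ),
      ∀ a b c, T a b c =
        ∑ i : Fin m01, ∑ j : Fin m12, ∑ k : Fin m02,
          X0 a (i, k) * X1 b (i, j) * X2 c (j, k)}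

/-- The triangle tensor network variety: Euclidean closure of the parametrized set. -/
def TNS (m01 m12 m02 n0 n1 n2 : ℕ) : Set (Fin n0 → Fin n1 → Fin n2 → ℂ) :=
  closure (tnsSet m01 m12 m02 n0 n1 n2)

/-- The vanishing ideal of a subset of an affine space over ℂ. -/
def vanishingIdeal' {ι : Type*} (Z : Set (ι → ℂ)) : Ideal (MvPolynomial ι ℂ) where
  carrier := {p | ∀ z ∈ Z, MvPolynomial.eval z p = 0}
  zero_mem' := by intro z _; simp
  add_mem' := by
    intro a b ha hb z hz
    simp [map_add, ha z hz, hb z hz]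
  smul_mem' := by
    intro c a ha z hz
    simp [smul_eq_mul, ha z hz]

/-- Affine dimension of a set of coordinate tensors. -/
def affineDim {n0 n1 n2 : ℕ} (Z : Set (Fin n0 → Fin n1 → Fin n2 → ℂ)) : WithBot ℕ∞ :=
  ringKrullDim (MvPolynomial (Fin n0 × Fin n1 × Fin n2) ℂ ⧸
    vanishingIdeal' ((fun T (p : Fin n0 × Fin n1 × Fin n2) => T p.1 p.2.1 p.2.2) '' Z))

/-- The pencil `⊞_{i=1}^m (v0 + ζ_i v1)·Id_{m12}`: slice 0 is the identity matrix,
slice 1 is the diagonal matrix with entry `ζ i` at position `(i,p)`. -/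
def diagPencil (m m12 : ℕ) (ζ : Fin m → ℂ) :
    Fin 2 → Fin (m * m12) → Fin (m * m12) → ℂ := fun a b c =>
  if b = c then (if a = 0 then 1 else ζ (finProdFinEquiv.symm b).1) else 0

/-!
A tensor of this network is the contraction of a pencil `(A, B)` of `m × m` matrices (the two
slices of the first core) against the two other cores. Multiplying the pencil by `Q` on the left
and `R` on the right can be absorbed into the other two cores, so the pencils
`(Q R, Q diag(ζ) R)` give exactly the normal forms, and the contraction is continuous in the pencil.
These pencils are dense: `(A, B) = (A, A (A⁻¹ B))` for invertible `A`, invertible matrices are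
dense, and `A⁻¹ B` is a limit of matrices with distinct eigenvalues, which are diagonalizable.
The latter density follows by induction on the size: an eigenvector makes `C` similar to
`[[c, W], [0, C']]`, and moving `c` off the finitely many eigenvalues of a nearby `C'` with distinct
eigenvalues gives a nearby matrix with distinct eigenvalues.
-/

open Matrix Polynomial Filter Topology

theorem Continuous.mem_closure_of_eventually_cofinite {X Y : Type*} [TopologicalSpace X]
    [TopologicalSpace Y] [T1Space Y] [∀ y : Y, (𝓝[≠] y).NeBot] {f : Y → X} {S : Set X}
    (hf : Continuous f) (hS : ∀ᶠ y in cofinite, f y ∈ S) (y : Y) : f y ∈ closure S := by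
  have hdense : Dense {y | f y ∈ S} := by
    convert dense_univ.sdiff_finite (eventually_cofinite.1 hS) using 1
    ext; simp
  exact closure_mono (Set.image_subset_iff.2 fun _ h => h)
    (hf.range_subset_closure_image_dense hdense ⟨y, rfl⟩)

namespace Matrix

variable {m n K : Type*} [Fintype m] [DecidableEq m] [Fintype n] [DecidableEq n] [Field K]

def HasDistinctEigenvalues (M : Matrix n n K) : Prop :=
  ∃ μ : n → K, Function.Injective μ ∧ M.charpoly = ∏ i, (X - C (μ i))

theorem HasDistinctEigenvalues.exists_eq_units_conj_diagonal {M : Matrix n n K}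
    (hM : M.HasDistinctEigenvalues) :
    ∃ (P : (Matrix n n K)ˣ) (d : n → K), M = P * diagonal d * P⁻¹ := by
  obtain ⟨μ, hμ, hchar⟩ := hM
  have hev : ∀ i, Module.End.HasEigenvalue M.toLin' (μ i) := fun i => by
    simp [Module.End.hasEigenvalue_iff_isRoot_charpoly, hchar, eval_prod, Finset.prod_eq_zero_iff,
      sub_eq_zero]
  choose v hv using fun i => (hev i).exists_hasEigenvector
  have hcols : LinearIndependent K v :=
    Module.End.eigenvectors_linearIndependent' _ μ hμ v hv
  let P : Matrix n n K := of fun r i => v i r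
  have hP : IsUnit P := by
    rw [← linearIndependent_cols_iff_isUnit]; exact hcols
  have hMP : M * P = P * diagonal μ := by
    ext r i
    have := congrFun (hv i).apply_eq_smul r
    simp only [toLin'_apply, mulVec, dotProduct, Pi.smul_apply, smul_eq_mul] at this
    rw [mul_diagonal, mul_apply]
    simpa [P, mul_comm] using this
  obtain ⟨U, hU⟩ := hP
  refine ⟨U, μ, ?_⟩
  rw [hU, ← hMP, mul_assoc, ← hU, Units.mul_inv, mul_one]

theorem exists_units_mulVec_single_eq {v : n → K} (hv : v ≠ 0) :
    ∃ (U : (Matrix n n K)ˣ) (i : n), (U : Matrix n n K) *ᵥ Pi.single i 1 = v := by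
  obtain ⟨i, hi⟩ := Function.ne_iff.1 hv
  have hdet : (updateCol 1 i v).det = v i := by
    rw [← cramer_apply, cramer_one]; rfl
  obtain ⟨U, hU⟩ := (isUnit_iff_isUnit_det _).2 (hdet ▸ (isUnit_iff_ne_zero.2 hi))
  refine ⟨U, i, ?_⟩
  ext r
  simp [hU]

theorem exists_units_conj_fromBlocks [IsAlgClosed K] {k : ℕ}
    (M : Matrix (Fin (k + 1)) (Fin (k + 1)) K) :
    ∃ (e : Fin (k + 1) ≃ Unit ⊕ Fin k) (P : (Matrix (Fin (k + 1)) (Fin (k + 1)) K)ˣ) (c : K)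
      (W : Matrix Unit (Fin k) K) (M' : Matrix (Fin k) (Fin k) K),
      M = P * reindex e.symm e.symm (fromBlocks (diagonal fun _ => c) W 0 M') * P⁻¹ := by
  obtain ⟨c, hc⟩ := Module.End.exists_eigenvalue (toLin' M)
  obtain ⟨v, hv⟩ := hc.exists_hasEigenvector
  obtain ⟨P, i, hPv⟩ := exists_units_mulVec_single_eq hv.2
  have hMv : M *ᵥ v = c • v := by simpa using hv.apply_eq_smul
  set E := P⁻¹.val * M * P.val
  have hE_mulVec : E *ᵥ Pi.single i 1 = c • Pi.single i 1 := by
    have hPinv : P⁻¹.val *ᵥ v = Pi.single i 1 := by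
      rw [← hPv, mulVec_mulVec, Units.inv_mul, one_mulVec]
    rw [← mulVec_mulVec, ← mulVec_mulVec, hPv, hMv, mulVec_smul, hPinv]
  have hE_col : ∀ r, E r i = if r = i then c else 0 := fun r => by
    simpa [Pi.single_apply, eq_comm] using congrFun hE_mulVec r
  let e : Fin (k + 1) ≃ Unit ⊕ Fin k :=
    (finSuccEquiv' i).trans ((Equiv.optionEquivSumPUnit _).trans (Equiv.sumComm _ _))
  have he : e.symm (Sum.inl ()) = i := by simp [e]
  set A := reindex e e E
  have hA₁₁ : A.toBlocks₁₁ = diagonal fun _ => c := by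
    ext ⟨⟩ ⟨⟩; simp [A, toBlocks₁₁, he, hE_col]
  have hA₂₁ : A.toBlocks₂₁ = 0 := by
    ext j ⟨⟩
    have : e.symm (Sum.inr j) ≠ i := by rw [← he]; simp
    simp [A, toBlocks₂₁, he, hE_col, this]
  refine ⟨e, P, c, A.toBlocks₁₂, A.toBlocks₂₂, ?_⟩
  rw [← hA₁₁, ← hA₂₁, fromBlocks_toBlocks]
  simp [A, E, ← mul_assoc]

theorem hasDistinctEigenvalues_units_conj_iff (P : (Matrix n n K)ˣ) (M : Matrix n n K) :
    (P * M * P⁻¹ : Matrix n n K).HasDistinctEigenvalues ↔ M.HasDistinctEigenvalues := by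
  simp [HasDistinctEigenvalues]

theorem HasDistinctEigenvalues.reindex (e : m ≃ n) {M : Matrix m m K}
    (hM : M.HasDistinctEigenvalues) : (reindex e e M).HasDistinctEigenvalues := by
  obtain ⟨μ, hμ, hchar⟩ := hM
  exact ⟨μ ∘ e.symm, hμ.comp e.symm.injective, by
    rw [charpoly_reindex, hchar, ← e.symm.prod_comp]; rfl⟩

theorem HasDistinctEigenvalues.fromBlocks {M : Matrix n n K} (hM : M.HasDistinctEigenvalues)
    {t : K} (ht : ¬M.charpoly.IsRoot t) (W : Matrix Unit n K) :
    (fromBlocks (diagonal fun _ => t) W 0 M).HasDistinctEigenvalues := by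
  obtain ⟨μ, hμ, hchar⟩ := hM
  refine ⟨Sum.elim (fun _ => t) μ, ?_, ?_⟩
  · refine Function.Injective.sumElim (fun _ _ _ => rfl) hμ fun _ i hti => ht ?_
    simp [hchar, eval_prod, Finset.prod_eq_zero_iff, sub_eq_zero, hti]
  · rw [charpoly_fromBlocks_zero₂₁, charpoly_diagonal, hchar, Fintype.prod_sum_type]
    simp

section Density

variable {𝕜 : Type*} [NontriviallyNormedField 𝕜]

theorem dense_setOf_isUnit : Dense {A : Matrix n n 𝕜 | IsUnit A} := fun A => by
  have hf : Continuous fun t : 𝕜 => A - algebraMap 𝕜 _ t := by fun_prop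
  have hunit : ∀ᶠ t in cofinite, A - algebraMap 𝕜 _ t ∈ {A | IsUnit A} :=
    A.finite_spectrum.subset fun t ht => spectrum.mem_iff.2 fun hu => ht (by simpa using hu.neg)
  simpa using hf.mem_closure_of_eventually_cofinite hunit 0

variable [IsAlgClosed 𝕜]

theorem dense_setOf_hasDistinctEigenvalues (k : ℕ) :
    Dense {M : Matrix (Fin k) (Fin k) 𝕜 | M.HasDistinctEigenvalues} := by
  induction k with
  | zero => exact fun M => subset_closure ⟨finZeroElim, fun i => i.elim0, by simp⟩
  | succ k ih =>
    intro M
    obtain ⟨e, P, c, W, M', rfl⟩ := exists_units_conj_fromBlocks M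
    let Φ : 𝕜 → Matrix (Fin k) (Fin k) 𝕜 → Matrix (Fin (k + 1)) (Fin (k + 1)) 𝕜 := fun t N =>
      P * reindex e.symm e.symm (fromBlocks (diagonal fun _ => t) W 0 N) * P⁻¹
    have hΦ : ∀ N : Matrix (Fin k) (Fin k) 𝕜, N.HasDistinctEigenvalues →
        Φ c N ∈ closure {M | M.HasDistinctEigenvalues} := fun N hN => by
      refine Continuous.mem_closure_of_eventually_cofinite (f := fun t => Φ t N) (by fun_prop) ?_ c
      refine (finite_setOfPred_isRoot N.charpoly_monic.ne_zero).subset fun t ht => ?_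
      by_contra hroot
      exact ht ((hasDistinctEigenvalues_units_conj_iff _ _).2 ((hN.fromBlocks hroot W).reindex _))
    exact closure_minimal hΦ (isClosed_closure.preimage (f := Φ c) (by fun_prop)) (ih M')

theorem dense_setOf_mul_diagonal_mul (k : ℕ) :
    Dense {p : Matrix (Fin k) (Fin k) 𝕜 × Matrix (Fin k) (Fin k) 𝕜 |
      ∃ Q R d, p = (Q * R, Q * diagonal d * R)} := by
  set S := {p : Matrix (Fin k) (Fin k) 𝕜 × Matrix (Fin k) (Fin k) 𝕜 |
      ∃ Q R d, p = (Q * R, Q * diagonal d * R)}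
  have hunit : {A | IsUnit A} ×ˢ Set.univ ⊆ closure S := by
    rintro ⟨_, B⟩ ⟨⟨U, rfl⟩, -⟩
    have hU : ∀ N : Matrix (Fin k) (Fin k) 𝕜, N.HasDistinctEigenvalues →
        (U.val, U.val * N) ∈ closure S := by
      intro N hN
      obtain ⟨P, d, rfl⟩ := hN.exists_eq_units_conj_diagonal
      exact subset_closure ⟨U * P, P⁻¹.val, d, by simp [mul_assoc]⟩
    have hB : U⁻¹.val * B ∈ (fun N => (U.val, U.val * N)) ⁻¹' closure S :=
      closure_minimal hU (isClosed_closure.preimage (by fun_prop))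
        (dense_setOf_hasDistinctEigenvalues k _)
    simpa [← mul_assoc] using hB
  exact dense_closure.1 ((dense_setOf_isUnit.prod dense_univ).mono hunit)

end Density

end Matrix

section TriangleContraction

variable {R ι₀ ι₁ ι₂ α β γ : Type*} [CommSemiring R] [Fintype α] [Fintype β] [Fintype γ]

def triangleContraction (X0 : ι₀ → Matrix α γ R) (X1 : ι₁ → Matrix α β R)
    (X2 : ι₂ → Matrix β γ R) : ι₀ → ι₁ → ι₂ → R :=
  fun a b c => trace ((X0 a)ᵀ * X1 b * X2 c)

theorem triangleContraction_apply (X0 : ι₀ → Matrix α γ R) (X1 : ι₁ → Matrix α β R)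
    (X2 : ι₂ → Matrix β γ R) (a : ι₀) (b : ι₁) (c : ι₂) :
    triangleContraction X0 X1 X2 a b c = ∑ i, ∑ j, ∑ k, X0 a i k * X1 b i j * X2 c j k := by
  simp only [triangleContraction, trace, diag, mul_apply, transpose_apply, Finset.sum_mul]
  rw [Finset.sum_comm]
  refine (Finset.sum_congr rfl fun j _ => Finset.sum_comm).trans Finset.sum_comm

theorem triangleContraction_mul_mul {α' γ' : Type*} [Fintype α'] [Fintype γ']
    (Q : Matrix α' α R) (X0 : ι₀ → Matrix α γ R) (P : Matrix γ γ' R)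
    (X1 : ι₁ → Matrix α' β R) (X2 : ι₂ → Matrix β γ' R) :
    triangleContraction (fun a => Q * X0 a * P) X1 X2 =
      triangleContraction X0 (fun b => Qᵀ * X1 b) (fun c => X2 c * Pᵀ) := by
  ext a b c
  simp only [triangleContraction, transpose_mul, Matrix.mul_assoc]
  rw [trace_mul_comm]
  simp only [Matrix.mul_assoc]

theorem triangleContraction_diagonal_apply [DecidableEq α] (s : ι₀ → α → R)
    (X1 : ι₁ → Matrix α β R) (X2 : ι₂ → Matrix β α R) (a : ι₀) (b : ι₁) (c : ι₂) :
    triangleContraction (fun a => diagonal (s a)) X1 X2 a b c =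
      ∑ i, ∑ j, s a i * X1 b i j * X2 c j i := by
  simp [triangleContraction_apply, diagonal_apply, ite_mul]

end TriangleContraction

theorem mem_tnsSet_iff {m01 m12 m02 n0 n1 n2 : ℕ} {T : Fin n0 → Fin n1 → Fin n2 → ℂ} :
    T ∈ tnsSet m01 m12 m02 n0 n1 n2 ↔
      ∃ (X0 : Fin n0 → Matrix (Fin m01) (Fin m02) ℂ) (X1 : Fin n1 → Matrix (Fin m01) (Fin m12) ℂ)
        (X2 : Fin n2 → Matrix (Fin m12) (Fin m02) ℂ), triangleContraction X0 X1 X2 = T := by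
  constructor
  · rintro ⟨X0, X1, X2, hT⟩
    refine ⟨fun a => of fun i k => X0 a (i, k), fun b => of fun i j => X1 b (i, j),
      fun c => of fun j k => X2 c (j, k), ?_⟩
    ext a b c
    simp [triangleContraction_apply, hT]
  · rintro ⟨X0, X1, X2, rfl⟩
    exact ⟨fun a p => X0 a p.1 p.2, fun b p => X1 b p.1 p.2, fun c p => X2 c p.1 p.2,
      triangleContraction_apply X0 X1 X2⟩

theorem sum_mul_mul_diagPencil {m m12 : ℕ} {ι₁ ι₂ : Type*} (ζ : Fin m → ℂ)
    (g1 : Matrix ι₁ (Fin (m * m12)) ℂ) (g2 : Matrix ι₂ (Fin (m * m12)) ℂ) (a : Fin 2)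
    (b : ι₁) (c : ι₂) :
    ∑ b', ∑ c', g1 b b' * g2 c c' * diagPencil m m12 ζ a b' c' =
      ∑ i, ∑ j, (if a = 0 then 1 else ζ i) * g1 b (finProdFinEquiv (i, j)) *
        g2 c (finProdFinEquiv (i, j)) := by
  simp only [diagPencil, mul_ite, mul_zero, Finset.sum_ite_eq, Finset.mem_univ, if_true]
  rw [← finProdFinEquiv.sum_comp, Fintype.sum_prod_type]
  refine Finset.sum_congr rfl fun i _ => Finset.sum_congr rfl fun j _ => ?_
  split_ifs <;> simp [mul_comm, mul_left_comm]

def pencilNormalForms (m m12 : ℕ) : Set (Fin 2 → Fin (m * m12) → Fin (m * m12) → ℂ) :=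
  {T | ∃ (ζ : Fin m → ℂ) (g1 g2 : Matrix (Fin (m * m12)) (Fin (m * m12)) ℂ),
    ∀ a b c, T a b c =
      ∑ b' : Fin (m * m12), ∑ c' : Fin (m * m12), g1 b b' * g2 c c' * diagPencil m m12 ζ a b' c'}

variable {m m12 : ℕ}

theorem pencilNormalForms_subset_tnsSet :
    pencilNormalForms m m12 ⊆ tnsSet m m12 m 2 (m * m12) (m * m12) := by
  rintro T ⟨ζ, g1, g2, hT⟩
  refine mem_tnsSet_iff.2 ⟨fun a => diagonal fun i => if a = 0 then 1 else ζ i,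
    fun b => of fun i j => g1 b (finProdFinEquiv (i, j)),
    fun c => of fun j i => g2 c (finProdFinEquiv (i, j)), ?_⟩
  ext a b c
  rw [hT, triangleContraction_diagonal_apply, sum_mul_mul_diagPencil]
  rfl

theorem triangleContraction_diagonal_mem_pencilNormalForms (ζ : Fin m → ℂ)
    (X1 : Fin (m * m12) → Matrix (Fin m) (Fin m12) ℂ)
    (X2 : Fin (m * m12) → Matrix (Fin m12) (Fin m) ℂ) :
    triangleContraction (fun a : Fin 2 => diagonal fun i => if a = 0 then 1 else ζ i) X1 X2 ∈
      pencilNormalForms m m12 := by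
  refine ⟨ζ, of fun b b' => X1 b (finProdFinEquiv.symm b').1 (finProdFinEquiv.symm b').2,
    of fun c c' => X2 c (finProdFinEquiv.symm c').2 (finProdFinEquiv.symm c').1, fun a b c => ?_⟩
  rw [triangleContraction_diagonal_apply, sum_mul_mul_diagPencil]
  simp only [of_apply, Equiv.symm_apply_apply]

theorem tnsSet_subset_closure_pencilNormalForms :
    tnsSet m m12 m 2 (m * m12) (m * m12) ⊆ closure (pencilNormalForms m m12) := by
  intro T hT
  obtain ⟨X0, X1, X2, rfl⟩ := mem_tnsSet_iff.1 hT
  let F : Matrix (Fin m) (Fin m) ℂ × Matrix (Fin m) (Fin m) ℂ → Fin 2 → _ := fun p =>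
    triangleContraction ![p.1, p.2] X1 X2
  have hF : Continuous F := by
    unfold F triangleContraction
    fun_prop
  have himg : F '' {p | ∃ Q R d, p = (Q * R, Q * diagonal d * R)} ⊆ pencilNormalForms m m12 := by
    rintro _ ⟨_, ⟨Q, R, d, rfl⟩, rfl⟩
    have hslices : ![Q * R, Q * diagonal d * R] =
        fun a => Q * diagonal (fun i => if a = 0 then 1 else d i) * R := by
      ext a : 1
      fin_cases a <;> simp
    simp only [F, hslices, triangleContraction_mul_mul]
    exact triangleContraction_diagonal_mem_pencilNormalForms _ _ _
  have hX0 : F (X0 0, X0 1) = triangleContraction X0 X1 X2 := by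
    simp only [F]
    congr
    ext a : 1
    fin_cases a <;> rfl
  rw [← hX0]
  exact closure_mono himg
    (image_closure_subset_closure_image hF ⟨_, dense_setOf_mul_diagonal_mul m _, rfl⟩)

theorem tns_critical_normal_form_general (m m12 : ℕ) :
    TNS m m12 m 2 (m * m12) (m * m12) =
      closure {T : Fin 2 → Fin (m * m12) → Fin (m * m12) → ℂ |
        ∃ (ζ : Fin m → ℂ) (g1 g2 : Matrix (Fin (m * m12)) (Fin (m * m12)) ℂ),
          ∀ a b c, T a b c =
            ∑ b' : Fin (m * m12), ∑ c' : Fin (m * m12),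
              g1 b b' * g2 c c' * diagPencil m m12 ζ a b' c'} :=
  subset_antisymm (closure_minimal tnsSet_subset_closure_pencilNormalForms isClosed_closure)
    (closure_mono pencilNormalForms_subset_tnsSet)

/-- Normal form for the critical triangle tensor network variety with an `(m,2,m)` corner. -/
theorem tns_critical_normal_form (m m12 : ℕ) (hm : 0 < m) (hm12 : 0 < m12) :
    TNS m m12 m 2 (m * m12) (m * m12) =
      closure {T : Fin 2 → Fin (m * m12) → Fin (m * m12) → ℂ |
        ∃ (ζ : Fin m → ℂ) (g1 g2 : Matrix (Fin (m * m12)) (Fin (m * m12)) ℂ),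
          ∀ a b c, T a b c =
            ∑ b' : Fin (m * m12), ∑ c' : Fin (m * m12),
              g1 b b' * g2 c c' * diagPencil m m12 ζ a b' c'} :=
  tns_critical_normal_form_general m m12
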